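/- arXiv:2404.04713 — 4 statements merged into one kernel-verified Lean document; each statement's English description precedes it below -/
import Mathlib

section
/- With the rounding procedure above, if for every point p the weights satisfy Σ_{p_i ∈ N(p)} x̂_i ≤ 1 + ε, then for every point p_ℓ, Pr[p_ℓ ∈ S] ≥ x̂_ℓ / (1 + ε). Consequently, for any subset Q ⊆ P with Σ_{p∈Q} x̂_p ≥ k, the expected number of points of Q included in S satisfies E[|S ∩ Q|] ≥ k/(1+ε). -/
open MeasureTheory

/-- If every neighborhood has total weight at most `1 + ε`, then each point is included
with probability at least `x ℓ / (1 + ε)`, and for any `Q ⊆ P` with `∑_{p∈Q} x p ≥ k`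
the expected number of selected points of `Q` is at least `k / (1 + ε)`. -/
theorem stmt1 {P : Type*} [Fintype P] [DecidableEq P]
    {Ω : Type*} [MeasurableSpace Ω] (μ : Measure Ω) [IsProbabilityMeasure μ]
    (N : P → Finset P) (hNself : ∀ p, p ∈ N p)
    (x : P → ℝ) (hx : ∀ p, 0 ≤ x p)
    (S : Ω → Finset P)
    (hmeas : ∀ p, MeasurableSet {ω | p ∈ S ω})
    -- inclusion probability of the weighted random-order rounding
    (hincl : ∀ p : P, (μ {ω | p ∈ S ω}).toReal = x p / ∑ i ∈ N p, x i)
    (ε : ℝ) (hε : 0 < ε)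
    (hnbr : ∀ p : P, ∑ i ∈ N p, x i ≤ 1 + ε) :
    (∀ ℓ : P, x ℓ / (1 + ε) ≤ (μ {ω | ℓ ∈ S ω}).toReal) ∧
    (∀ (Q : Finset P) (k : ℝ), 0 ≤ k → k ≤ ∑ p ∈ Q, x p →
      k / (1 + ε) ≤ ∫ ω, ((S ω ∩ Q).card : ℝ) ∂μ) := by
  have hεpos : (0:ℝ) < 1 + ε := by linarith
  have h1 : ∀ ℓ : P, x ℓ / (1 + ε) ≤ (μ {ω | ℓ ∈ S ω}).toReal := by
    intro ℓ
    rw [hincl ℓ]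
    set s := ∑ i ∈ N ℓ, x i with hs
    have hsnn : 0 ≤ s := Finset.sum_nonneg fun i _ => hx i
    rcases eq_or_lt_of_le hsnn with h0 | hpos
    · have hx0 : x ℓ = 0 := by
        have hle : x ℓ ≤ s := Finset.single_le_sum (fun i _ => hx i) (hNself ℓ)
        linarith [hx ℓ]
      simp [hx0]
    · exact div_le_div_of_nonneg_left (hx ℓ) hpos (hnbr ℓ)
  refine ⟨h1, fun Q k hk hkQ => ?_⟩
  have hcard : ∀ ω, ((S ω ∩ Q).card : ℝ) =
      ∑ p ∈ Q, if p ∈ S ω then (1:ℝ) else 0 := by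
    intro ω
    have : S ω ∩ Q = Q.filter (· ∈ S ω) := by
      ext a; simp [Finset.mem_filter, Finset.mem_inter, and_comm]
    rw [this, Finset.card_filter]
    push_cast
    rfl
  have hint : ∀ p : P, ∫ ω, (if p ∈ S ω then (1:ℝ) else 0) ∂μ
      = (μ {ω | p ∈ S ω}).toReal := by
    intro p
    have : (fun ω => if p ∈ S ω then (1:ℝ) else 0)
        = Set.indicator {ω | p ∈ S ω} (fun _ => (1:ℝ)) := by
      ext ω; by_cases h : p ∈ S ω <;> simp [h]
    rw [this]
    exact integral_indicator_one (hmeas p)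
  have hI : ∀ p : P, Integrable (fun ω => if p ∈ S ω then (1:ℝ) else 0) μ := by
    intro p
    have : (fun ω => if p ∈ S ω then (1:ℝ) else 0)
        = Set.indicator {ω | p ∈ S ω} (fun _ => (1:ℝ)) := by
      ext ω; by_cases h : p ∈ S ω <;> simp [h]
    rw [this]
    exact (integrable_const (1:ℝ)).indicator (hmeas p)
  calc k / (1 + ε) ≤ ∑ p ∈ Q, x p / (1 + ε) := by
        rw [← Finset.sum_div]
        gcongr
    _ ≤ ∑ p ∈ Q, (μ {ω | p ∈ S ω}).toReal :=
        Finset.sum_le_sum fun p _ => h1 p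
    _ = ∫ ω, ((S ω ∩ Q).card : ℝ) ∂μ := by
        simp_rw [hcard]
        rw [integral_finset_sum Q fun p _ => hI p]
        simp_rw [hint]
end

section
/- Let P be a finite metric space with |P| ≥ k and let S ⊆ P with |S| = k be produced by the greedy (Gonzalez) farthest-point procedure: start with any point, and repeatedly add the point of P maximizing the distance to the current set. Then the minimum pairwise distance of S is at least σ_k / 2, where σ_k is the optimal k-max-min diversity of P. -/
/-- Gonzalez's greedy farthest-point procedure: if `g 0, g 1, …, g (k-1)` are chosen
greedily from `P` (each `g i` maximizes, over `p ∈ P`, the minimum distance to the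
previously chosen points) and the chosen points are distinct, then the minimum
pairwise distance of the output is at least `σ_k / 2`, where `σ_k` is witnessed by
any `k`-subset `T ⊆ P` whose pairwise distances are all at least `δ`. -/
theorem stmt3 {X : Type*} [MetricSpace X] (P : Finset X) (k : ℕ) (hk : 1 ≤ k)
    (hPcard : k ≤ P.card)
    (g : ℕ → X) (hgP : ∀ i < k, g i ∈ P)
    (hginj : ∀ i < k, ∀ j < k, g i = g j → i = j)
    (hgreedy : ∀ i, 0 < i → i < k → ∀ p ∈ P,
      sInf ((fun j => dist p (g j)) '' Set.Iio i) ≤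
        sInf ((fun j => dist (g i) (g j)) '' Set.Iio i))
    (T : Finset X) (hT : T ⊆ P) (hTcard : T.card = k)
    (δ : ℝ) (hδ : ∀ p ∈ T, ∀ q ∈ T, p ≠ q → δ ≤ dist p q) :
    ∀ i < k, ∀ j < k, i ≠ j → δ / 2 ≤ dist (g i) (g j) := by
  suffices H : ∀ i j, i < j → j < k → δ / 2 ≤ dist (g i) (g j) by
    intro i hi j hj hij
    rcases lt_or_gt_of_ne hij with h | h
    · exact H i j h hj
    · rw [dist_comm]; exact H j i h hi
  intro i j hij hjk
  by_contra hlt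
  push_neg at hlt
  have hj0 : 0 < j := lt_of_le_of_lt (Nat.zero_le i) hij
  have himem : dist (g j) (g i) ∈ (fun l => dist (g j) (g l)) '' Set.Iio j :=
    ⟨i, hij, rfl⟩
  have hkey : ∀ p ∈ P, ∃ l < j, dist p (g l) < δ / 2 := by
    intro p hp
    have h1 : sInf ((fun l => dist (g j) (g l)) '' Set.Iio j) ≤ dist (g j) (g i) :=
      csInf_le ⟨0, by rintro x ⟨l, -, rfl⟩; positivity⟩ himem
    have h2 := hgreedy j hj0 hjk p hp
    have h3 : sInf ((fun l => dist p (g l)) '' Set.Iio j) < δ / 2 := by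
      refine lt_of_le_of_lt (le_trans h2 h1) ?_
      rwa [dist_comm]
    have hne2 : ((fun l => dist p (g l)) '' Set.Iio j).Nonempty := ⟨dist p (g i), i, hij, rfl⟩
    obtain ⟨x, ⟨l, hl, rfl⟩, hx⟩ := exists_lt_of_csInf_lt hne2 h3
    exact ⟨l, hl, hx⟩
  classical
  choose f hf1 hf2 using fun (t : X) (ht : t ∈ P) => hkey t ht
  set F : X → ℕ := fun t => if h : t ∈ P then f t h else 0 with hF
  have hmaps : ∀ t ∈ T, F t ∈ Finset.range j := by
    intro t ht
    have htP := hT ht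
    simp only [hF, dif_pos htP, Finset.mem_range]
    exact hf1 t htP
  have hcardlt : (Finset.range j).card < T.card := by
    rw [Finset.card_range, hTcard]; exact hjk
  obtain ⟨x, hx, y, hy, hxy, hFxy⟩ :=
    Finset.exists_ne_map_eq_of_card_lt_of_maps_to hcardlt hmaps
  have hxP := hT hx
  have hyP := hT hy
  have hx2 : dist x (g (F x)) < δ / 2 := by
    simp only [hF, dif_pos hxP]; exact hf2 x hxP
  have hy2 : dist y (g (F x)) < δ / 2 := by
    rw [hFxy]; simp only [hF, dif_pos hyP]; exact hf2 y hyP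
  have : dist x y < δ := by
    calc dist x y ≤ dist x (g (F x)) + dist (g (F x)) y := dist_triangle _ _ _
    _ = dist x (g (F x)) + dist y (g (F x)) := by rw [dist_comm (g (F x)) y]
    _ < δ / 2 + δ / 2 := by linarith
    _ = δ := by ring
  exact absurd (hδ x hx y hy hxy) (not_le.mpr this)
end

section
/- Consider four points on the real line: blue points at 0 and 5 − ε/2, and red points at 5 + ε/2 and 10, for 0 < ε < 1. The pair {5 − ε/2, 5 + ε/2} (one point per color) achieves the optimal fair 2-center objective (covering radius 5 − ε/2 is optimal among color-balanced pairs), but its max-min diversity equals ε, whereas the color-balanced pair {0, 10} has diversity 10. Hence the ratio between the diversity of a fair k-center optimal solution and the optimal fair diversity can be arbitrarily small. -/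
open Finset

/-- Fair `k`-center versus fair diversification: for blue points `{0, 5 − ε/2}` and
red points `{5 + ε/2, 10}` on the line, the pair `{5 − ε/2, 5 + ε/2}` is optimal for
the fair 2-center objective (it covers everything within radius `5 − ε/2`, and every
color-balanced pair has covering radius at least `5 − ε/2`), but its diversity is
only `ε`, whereas the color-balanced pair `{0, 10}` has diversity `10`. -/
theorem stmt11 (ε : ℝ) (hε0 : 0 < ε) (hε1 : ε < 1) :
    let Blue : Finset ℝ := {0, 5 - ε / 2}
    let Red : Finset ℝ := {5 + ε / 2, 10}
    let P : Finset ℝ := Blue ∪ Red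
    -- the pair (5 − ε/2, 5 + ε/2) covers P within radius 5 − ε/2
    (∀ p ∈ P, min (dist p (5 - ε / 2)) (dist p (5 + ε / 2)) ≤ 5 - ε / 2) ∧
    -- and no color-balanced pair does better
    (∀ b ∈ Blue, ∀ r ∈ Red, ∃ p ∈ P, 5 - ε / 2 ≤ min (dist p b) (dist p r)) ∧
    -- yet its diversity is only ε
    dist (5 - ε / 2) (5 + ε / 2) = ε ∧
    -- while the color-balanced pair {0, 10} has diversity 10
    ((0 : ℝ) ∈ Blue ∧ (10 : ℝ) ∈ Red ∧ dist (0 : ℝ) (10 : ℝ) = 10) := by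
  intro Blue Red P
  refine ⟨?_, ?_, ?_, ?_, ?_, ?_⟩
  · intro p hp
    simp only [P, Blue, Red, Finset.mem_union, Finset.mem_insert, Finset.mem_singleton] at hp
    rcases hp with (rfl | rfl) | (rfl | rfl) <;> simp only [Real.dist_eq]
    · apply min_le_of_left_le; rw [abs_of_nonpos (by linarith)]; linarith
    · apply min_le_of_left_le; simpa using by linarith
    · apply min_le_of_left_le; rw [abs_of_nonneg (by linarith)]; linarith
    · apply min_le_of_right_le; rw [abs_of_nonneg (by linarith)]; linarith
  · intro b hb r hr
    simp only [Blue, Finset.mem_insert, Finset.mem_singleton] at hb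
    simp only [Red, Finset.mem_insert, Finset.mem_singleton] at hr
    rcases hb with rfl | rfl <;> rcases hr with rfl | rfl
    · refine ⟨10, by simp [P, Red], ?_⟩
      simp only [Real.dist_eq]
      rw [abs_of_nonneg (by linarith), abs_of_nonneg (by linarith)]
      apply le_min <;> linarith
    · refine ⟨5 - ε / 2, by simp [P, Blue], ?_⟩
      simp only [Real.dist_eq]
      rw [abs_of_nonneg (by linarith), abs_of_nonpos (by linarith)]
      apply le_min <;> linarith
    · refine ⟨0, by simp [P, Blue], ?_⟩
      simp only [Real.dist_eq]
      rw [abs_of_nonpos (by linarith), abs_of_nonpos (by linarith)]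
      apply le_min <;> linarith
    · refine ⟨0, by simp [P, Blue], ?_⟩
      simp only [Real.dist_eq]
      rw [abs_of_nonpos (by linarith), abs_of_nonpos (by linarith)]
      apply le_min <;> linarith
  · rw [Real.dist_eq, abs_of_nonpos (by linarith)]; ring
  · simp [Blue]
  · simp [Red]
  · rw [Real.dist_eq, abs_of_nonpos (by linarith)]; norm_num
end

section
/- Let P be a finite metric space and γ* the optimal value of the fair max-min diversification problem on P with color requirements k_1,…,k_m. Suppose G ⊆ P has the property that for every p ∈ P there exists g(p) ∈ G with c(g(p)) = c(p) and dist(p, g(p)) ≤ (ε/(4))·γ*, where g is injective on any γ*-separated set, and ε ∈ (0,1). Then G contains a feasible solution Ŝ (satisfying |Ŝ(c_j)| ≥ k_j for all j) with diversity at least (1 − ε/2)·γ* ≥ γ*/(1+ε). -/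
open Finset

/-- Coreset correctness for fair max-min diversification: if every point of `P` can be
snapped to a same-colored point of `G` within distance `(ε/4) γ*`, injectively on
`γ*`-separated sets, then `G` contains a feasible set `Ŝ` (at least `k j` points of
each color `j`) of diversity at least `(1 − ε/2) γ* ≥ γ*/(1+ε)`. -/
theorem stmt15 {X : Type*} [MetricSpace X] [DecidableEq X] {m : ℕ}
    (P : Finset X) (c : X → Fin m) (k : Fin m → ℕ)
    (ε γstar : ℝ) (hε0 : 0 < ε) (hε1 : ε < 1) (hγ : 0 ≤ γstar)
    (Sstar : Finset X) (hSstarP : Sstar ⊆ P)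
    (hfair : ∀ j, k j ≤ (Sstar.filter (fun p => c p = j)).card)
    (hdiv : ∀ p ∈ Sstar, ∀ q ∈ Sstar, p ≠ q → γstar ≤ dist p q)
    (G : Finset X) (hGP : G ⊆ P)
    (g : X → X)
    (hgG : ∀ p ∈ P, g p ∈ G)
    (hgc : ∀ p ∈ P, c (g p) = c p)
    (hgnear : ∀ p ∈ P, dist p (g p) ≤ (ε / 4) * γstar)
    (hginj : ∀ p ∈ P, ∀ q ∈ P, p ≠ q → γstar ≤ dist p q → g p ≠ g q) :
    ∃ Shat ⊆ G,
      (∀ j, k j ≤ (Shat.filter (fun p => c p = j)).card) ∧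
      (∀ p ∈ Shat, ∀ q ∈ Shat, p ≠ q → (1 - ε / 2) * γstar ≤ dist p q) ∧
      γstar / (1 + ε) ≤ (1 - ε / 2) * γstar := by
  refine ⟨Sstar.image g, ?_, ?_, ?_, ?_⟩
  · intro x hx
    obtain ⟨p, hp, rfl⟩ := Finset.mem_image.mp hx
    exact hgG p (hSstarP hp)
  · intro j
    have hmaps : ∀ p ∈ Sstar.filter (fun p => c p = j),
        g p ∈ (Sstar.image g).filter (fun p => c p = j) := by
      intro p hp
      simp only [Finset.mem_filter] at hp ⊢
      exact ⟨Finset.mem_image_of_mem g hp.1, (hgc p (hSstarP hp.1)).trans hp.2⟩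
    have hinj : ∀ p ∈ Sstar.filter (fun p => c p = j),
        ∀ q ∈ Sstar.filter (fun p => c p = j), g p = g q → p = q := by
      intro p hp q hq hpq
      simp only [Finset.mem_filter] at hp hq
      by_contra hne
      exact hginj p (hSstarP hp.1) q (hSstarP hq.1) hne
        (hdiv p hp.1 q hq.1 hne) hpq
    calc k j ≤ (Sstar.filter (fun p => c p = j)).card := hfair j
      _ ≤ ((Sstar.image g).filter (fun p => c p = j)).card :=
          Finset.card_le_card_of_injOn g hmaps hinj
  · intro x hx y hy hxy
    obtain ⟨p, hp, rfl⟩ := Finset.mem_image.mp hx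
    obtain ⟨q, hq, rfl⟩ := Finset.mem_image.mp hy
    have hne : p ≠ q := by rintro rfl; exact hxy rfl
    have h1 := hdiv p hp q hq hne
    have h2 := hgnear p (hSstarP hp)
    have h3 := hgnear q (hSstarP hq)
    have htri : dist p q ≤ dist p (g p) + dist (g p) (g q) + dist (g q) q :=
      dist_triangle4 p (g p) (g q) q
    rw [dist_comm (g q) q] at htri
    linarith
  · rw [div_le_iff₀ (by linarith)]
    nlinarith [mul_nonneg hγ (mul_nonneg hε0.le hε0.le), mul_nonneg hγ hε0.le, mul_le_of_le_one_left (mul_nonneg hγ hε0.le) hε1.le]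
end
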